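/- Let d ≥ 4 be an integer. For every (1,γ,δ) ∈ W_d there exist n ∈ {2,3} and elements a₂,…,a_n, b₁,…,b_n ∈ W_d such that (1,γ,δ) + a₂ + ⋯ + a_n = b₁ + ⋯ + b_n componentwise in ℤ³, each a_i is greater than or equal to (1,γ,δ) and each b_j is strictly greater than (1,γ,δ) in the lexicographic order on ℤ³, and the sets {(1,γ,δ), a₂, …, a_n} and {b₁, …, b_n} are disjoint. (Every variable w_{(1,γ,δ)} admits a special 2-binomial or 3-binomial.) -/

import Mathlib

/-- `W_d`: triples `(r,γ,δ)` encoding the degree-`d` monomials invariant under the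
action of the diagonal matrix `M(1,e,e²,e³)`. -/
def Wset (d : ℕ) : Set (ℤ × ℤ × ℤ) :=
  {x | 0 ≤ x.1 ∧ x.1 ≤ 3 ∧ 0 ≤ x.2.1 ∧ 0 ≤ x.2.2 ∧
    0 ≤ x.2.2 + 2 * x.2.1 + (1 - x.1) * (d : ℤ) ∧ 2 * x.2.2 + 3 * x.2.1 ≤ x.1 * (d : ℤ)}

/-- Strict lexicographic order on `ℤ³`. -/
def lexLt (x y : ℤ × ℤ × ℤ) : Prop :=
  x.1 < y.1 ∨ (x.1 = y.1 ∧ (x.2.1 < y.2.1 ∨ (x.2.1 = y.2.1 ∧ x.2.2 < y.2.2)))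

/-- Weak lexicographic order on `ℤ³`. -/
def lexLe (x y : ℤ × ℤ × ℤ) : Prop := lexLt x y ∨ x = y

/-! If `2δ + 3γ + 4 ≤ d`, then `(1,γ,δ) + (1,γ,δ+2) = 2 • (1,γ,δ+1)` is a 2-binomial.
Otherwise `(1,γ,δ)` lies near the face `2δ + 3γ = d`, and `(1,γ,δ) + (3,d,0) = (4, γ+d, δ)` splits
into two points of `W_d` with `r = 2` by halving `γ + d` and `δ` up to parity corrections. The
splitting fails only when `δ ≤ 1` and `d = 3γ + 1 + δ`; there the 3-binomial
`(1,γ,δ) + (3,d,0) + (2,0,d) = (2,1+δ,d-2-δ) + 2 • (2,2γ,1+δ)` works instead. -/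

def HasSpecialBinomial (d : ℕ) (w : ℤ × ℤ × ℤ) : Prop :=
  ∃ n : ℕ, (n = 2 ∨ n = 3) ∧
    ∃ (a : Fin (n - 1) → ℤ × ℤ × ℤ) (b : Fin n → ℤ × ℤ × ℤ),
      (∀ i, a i ∈ Wset d) ∧ (∀ j, b j ∈ Wset d) ∧
      (w + ∑ i, a i = ∑ j, b j) ∧
      (∀ i, lexLe w (a i)) ∧
      (∀ j, lexLt w (b j)) ∧
      (({w} ∪ Set.range a) ∩ Set.range b = ∅)

theorem lexLt.ne {x y : ℤ × ℤ × ℤ} (h : lexLt x y) : x ≠ y := by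
  rintro rfl
  rcases h with h | ⟨-, h | ⟨-, h⟩⟩ <;> exact lt_irrefl _ h

section

variable {d : ℕ} {w : ℤ × ℤ × ℤ}

theorem HasSpecialBinomial.of_two {a p q : ℤ × ℤ × ℤ}
    (ha : a ∈ Wset d) (hp : p ∈ Wset d) (hq : q ∈ Wset d) (hsum : w + a = p + q)
    (hwa : lexLe w a) (hwp : lexLt w p) (hwq : lexLt w q) (hap : a ≠ p) (haq : a ≠ q) :
    HasSpecialBinomial d w := by
  refine ⟨2, Or.inl rfl, ![a], ![p, q], ?_, ?_, ?_, ?_, ?_, ?_⟩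
  · simpa using ha
  · simp [Fin.forall_fin_two, hp, hq]
  · simpa [Fin.sum_univ_two] using hsum
  · simpa using hwa
  · simp [Fin.forall_fin_two, hwp, hwq]
  · simp [Set.eq_empty_iff_forall_notMem, hwp.ne, hwq.ne, hap, haq]

theorem HasSpecialBinomial.of_three {a₂ a₃ p q r : ℤ × ℤ × ℤ}
    (ha₂ : a₂ ∈ Wset d) (ha₃ : a₃ ∈ Wset d) (hp : p ∈ Wset d) (hq : q ∈ Wset d)
    (hr : r ∈ Wset d) (hsum : w + (a₂ + a₃) = p + q + r)
    (hwa₂ : lexLe w a₂) (hwa₃ : lexLe w a₃)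
    (hwp : lexLt w p) (hwq : lexLt w q) (hwr : lexLt w r)
    (ha₂p : a₂ ≠ p) (ha₂q : a₂ ≠ q) (ha₂r : a₂ ≠ r)
    (ha₃p : a₃ ≠ p) (ha₃q : a₃ ≠ q) (ha₃r : a₃ ≠ r) :
    HasSpecialBinomial d w := by
  refine ⟨3, Or.inr rfl, ![a₂, a₃], ![p, q, r], ?_, ?_, ?_, ?_, ?_, ?_⟩
  · simp [Fin.forall_fin_two, ha₂, ha₃]
  · simp [Fin.forall_fin_succ, hp, hq, hr]
  · simpa [Fin.sum_univ_two, Fin.sum_univ_three] using hsum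
  · simp [Fin.forall_fin_two, hwa₂, hwa₃]
  · simp [Fin.forall_fin_succ, hwp, hwq, hwr]
  · simp [Set.eq_empty_iff_forall_notMem, hwp.ne, hwq.ne, hwr.ne, ha₂p, ha₂q, ha₂r,
      ha₃p, ha₃q, ha₃r]

end

section

variable {d : ℕ} {γ δ : ℤ}

theorem hasSpecialBinomial_of_add_four_le (hγ : 0 ≤ γ) (hδ : 0 ≤ δ)
    (h : 2 * δ + 3 * γ + 4 ≤ d) : HasSpecialBinomial d (1, γ, δ) := by
  refine HasSpecialBinomial.of_two (a := (1, γ, δ + 2)) (p := (1, γ, δ + 1)) (q := (1, γ, δ + 1))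
    ?_ ?_ ?_ ?_ ?_ ?_ ?_ ?_ ?_
  all_goals
    simp only [Wset, Set.mem_ofPred_eq, lexLe, lexLt, Prod.mk_add_mk, Prod.mk.injEq, ne_eq, true_and]
    omega

theorem hasSpecialBinomial_of_eq_three_mul_add (hd : 4 ≤ d) (hδ : 0 ≤ δ) (hδ₁ : δ ≤ 1)
    (h : d = 3 * γ + 1 + δ) : HasSpecialBinomial d (1, γ, δ) := by
  refine HasSpecialBinomial.of_three (a₂ := (3, d, 0)) (a₃ := (2, 0, d))
    (p := (2, 1 + δ, d - 2 - δ)) (q := (2, 2 * γ, 1 + δ)) (r := (2, 2 * γ, 1 + δ))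
    ?_ ?_ ?_ ?_ ?_ ?_ ?_ ?_ ?_ ?_ ?_ ?_ ?_ ?_ ?_ ?_ ?_
  all_goals
    simp only [Wset, Set.mem_ofPred_eq, lexLe, lexLt, Prod.mk_add_mk, Prod.mk.injEq, ne_eq, true_and]
    omega

theorem exists_split_into_fst_two (hd : 4 ≤ d) (hγ : 0 ≤ γ) (hδ : 0 ≤ δ)
    (hle : 2 * δ + 3 * γ ≤ d) (hlt : d < 2 * δ + 3 * γ + 4) (h : ¬(δ ≤ 1 ∧ d = 3 * γ + 1 + δ)) :
    ∃ g e : ℤ, ((2 : ℤ), g, e) ∈ Wset d ∧ ((2 : ℤ), γ + d - g, δ - e) ∈ Wset d := by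
  simp only [Wset, Set.mem_ofPred_eq]
  obtain ⟨m, hm | hm⟩ := Int.even_or_odd' δ <;> obtain ⟨l, hl | hl⟩ := Int.even_or_odd' (γ + d)
  · exact ⟨l, m, by omega⟩
  · rcases eq_or_ne δ 0 with h0 | h0
    · exact ⟨l + 1, 0, by omega⟩
    · exact ⟨l, m + 1, by omega⟩
  · by_cases h2 : 2 * δ + 3 * γ + 2 ≤ d
    · exact ⟨l, m + 1, by omega⟩
    · exact ⟨l + 1, m - 1, by omega⟩
  · exact ⟨l + 1, m, by omega⟩

theorem hasSpecialBinomial_of_split_into_fst_two {g e : ℤ}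
    (hp : ((2 : ℤ), g, e) ∈ Wset d) (hq : ((2 : ℤ), γ + d - g, δ - e) ∈ Wset d) :
    HasSpecialBinomial d (1, γ, δ) := by
  refine HasSpecialBinomial.of_two (a := (3, d, 0)) (hp := hp) (hq := hq) ?_ ?_ ?_ ?_ ?_ ?_ ?_
  all_goals
    simp only [Wset, Set.mem_ofPred_eq, lexLe, lexLt, Prod.mk_add_mk, Prod.mk.injEq, ne_eq]
    omega

end

theorem stmt11 (d : ℕ) (hd : 4 ≤ d) (γ δ : ℤ) (hmem : ((1:ℤ), γ, δ) ∈ Wset d) :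
    ∃ n : ℕ, (n = 2 ∨ n = 3) ∧
      ∃ (a : Fin (n - 1) → ℤ × ℤ × ℤ) (b : Fin n → ℤ × ℤ × ℤ),
        (∀ i, a i ∈ Wset d) ∧ (∀ j, b j ∈ Wset d) ∧
        (((1:ℤ), γ, δ) + ∑ i, a i = ∑ j, b j) ∧
        (∀ i, lexLe ((1:ℤ), γ, δ) (a i)) ∧
        (∀ j, lexLt ((1:ℤ), γ, δ) (b j)) ∧
        ((({((1:ℤ), γ, δ)} : Set (ℤ × ℤ × ℤ)) ∪ Set.range a) ∩ Set.range b = ∅) := by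
  simp only [Wset, Set.mem_ofPred_eq] at hmem
  obtain ⟨-, -, hγ, hδ, -, hle⟩ := hmem
  change HasSpecialBinomial d (1, γ, δ)
  by_cases hsmall : 2 * δ + 3 * γ + 4 ≤ d
  · exact hasSpecialBinomial_of_add_four_le hγ hδ hsmall
  by_cases hexc : δ ≤ 1 ∧ d = 3 * γ + 1 + δ
  · exact hasSpecialBinomial_of_eq_three_mul_add hd hδ hexc.1 hexc.2
  obtain ⟨g, e, hp, hq⟩ := exists_split_into_fst_two hd hγ hδ (by omega) (not_le.mp hsmall) hexc
  exact hasSpecialBinomial_of_split_into_fst_two hp hq
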